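/- Let u : ℝ³ → ℝ be a smooth function of (x, y, t) satisfying (u²)_{xy} + u_{yy} + 2u_{xt} = 0. Then the vector fields X = ∂_y − λ ∂_x + 2u_x λ ∂_λ and Y = ∂_t + ((1/2)λ² + uλ) ∂_x − (u_x λ + u_y + 2u u_x) λ ∂_λ on ℝ⁴ with coordinates (x, y, t, λ) commute. -/

import Mathlib

noncomputable def pd {n : ℕ} (i : Fin n) (f : (Fin n → ℝ) → ℝ) (p : Fin n → ℝ) : ℝ :=
  fderiv ℝ f p (Pi.single i 1)

-- basic rules
lemma pd_add {n : ℕ} {f g : (Fin n → ℝ) → ℝ} {p} (hf : DifferentiableAt ℝ f p)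
    (hg : DifferentiableAt ℝ g p) (j : Fin n) :
    pd j (fun q => f q + g q) p = pd j f p + pd j g p := by
  simp [pd, fderiv_fun_add hf hg]

lemma pd_mul {n : ℕ} {f g : (Fin n → ℝ) → ℝ} {p} (hf : DifferentiableAt ℝ f p)
    (hg : DifferentiableAt ℝ g p) (j : Fin n) :
    pd j (fun q => f q * g q) p = pd j f p * g p + f p * pd j g p := by
  simp [pd, fderiv_fun_mul hf hg]; ring

lemma pd_neg {n : ℕ} {f : (Fin n → ℝ) → ℝ} {p} (j : Fin n) :
    pd j (fun q => -(f q)) p = -(pd j f p) := by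
  simp [pd, fderiv_neg]

lemma pd_const_mul {n : ℕ} {f : (Fin n → ℝ) → ℝ} {p} (hf : DifferentiableAt ℝ f p)
    (c : ℝ) (j : Fin n) :
    pd j (fun q => c * f q) p = c * pd j f p := by
  simp [pd, fderiv_const_mul hf c]

lemma pd_const {n : ℕ} (c : ℝ) (p : Fin n → ℝ) (j : Fin n) :
    pd j (fun _ => c) p = 0 := by
  simp [pd]

lemma pd_coord {n : ℕ} (i j : Fin n) (p : Fin n → ℝ) :
    pd j (fun q => q i) p = if i = j then 1 else 0 := by
  have : (fun q : Fin n → ℝ => q i) = (ContinuousLinearMap.proj i : (Fin n → ℝ) →L[ℝ] ℝ) := rfl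
  rw [pd, this, ContinuousLinearMap.fderiv]
  simp [Pi.single_apply]




lemma contDiff_pd {n : ℕ} {f : (Fin n → ℝ) → ℝ} (hf : ContDiff ℝ (⊤ : ℕ∞) f) (i : Fin n) :
    ContDiff ℝ (⊤ : ℕ∞) (pd i f) := by
  have h1 : ContDiff ℝ (⊤ : ℕ∞) (fderiv ℝ f) := hf.fderiv_right (by simp)
  exact (ContinuousLinearMap.apply ℝ ℝ (Pi.single i 1)).contDiff.comp h1

lemma pd_pd_eq {n : ℕ} {f : (Fin n → ℝ) → ℝ} (hf : ContDiff ℝ (⊤ : ℕ∞) f) (i j : Fin n)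
    (p : Fin n → ℝ) :
    pd j (pd i f) p = fderiv ℝ (fderiv ℝ f) p (Pi.single j 1) (Pi.single i 1) := by
  have h1 : ContDiff ℝ (⊤ : ℕ∞) (fderiv ℝ f) := hf.fderiv_right (by simp)
  have : pd i f = (ContinuousLinearMap.apply ℝ ℝ (Pi.single i 1)) ∘ (fderiv ℝ f) := rfl
  rw [pd, this, fderiv_comp p (ContinuousLinearMap.differentiableAt _)
    (h1.differentiable (by simp)).differentiableAt]
  simp

lemma pd_symm {n : ℕ} {f : (Fin n → ℝ) → ℝ} (hf : ContDiff ℝ (⊤ : ℕ∞) f) (i j : Fin n)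
    (p : Fin n → ℝ) :
    pd j (pd i f) p = pd i (pd j f) p := by
  rw [pd_pd_eq hf, pd_pd_eq hf]
  exact second_derivative_symmetric
    (fun y => ((hf.differentiable (by simp)).differentiableAt).hasFDerivAt (x := y))
    (((hf.fderiv_right (m := (⊤ : ℕ∞)) (by simp)).differentiable (by simp)).differentiableAt.hasFDerivAt) _ _




noncomputable def lieBracket {n : ℕ} (X Y : (Fin n → ℝ) → (Fin n → ℝ)) (p : Fin n → ℝ) :
    Fin n → ℝ :=
  fun i => (∑ j, X p j * pd j (fun q => Y q i) p) - (∑ j, Y p j * pd j (fun q => X q i) p)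

noncomputable def proj34 : (Fin 4 → ℝ) →L[ℝ] (Fin 3 → ℝ) :=
  ContinuousLinearMap.pi fun i => ContinuousLinearMap.proj (Fin.castSucc i)

lemma proj34_apply (w : Fin 4 → ℝ) : proj34 w = ![w 0, w 1, w 2] := by
  funext i; fin_cases i <;> rfl

lemma pd_comp_pi (g : (Fin 3 → ℝ) → ℝ) (p : Fin 4 → ℝ)
    (hg : DifferentiableAt ℝ g ![p 0, p 1, p 2]) (j : Fin 4) :
    pd j (fun q => g ![q 0, q 1, q 2]) p =
      if h : (j : ℕ) < 3 then pd ⟨j, h⟩ g ![p 0, p 1, p 2] else 0 := by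
  have hc : (fun q : Fin 4 → ℝ => g ![q 0, q 1, q 2]) = g ∘ proj34 := by
    funext q; simp [proj34_apply]
  have hg' : DifferentiableAt ℝ g (proj34 p) := by rw [proj34_apply]; exact hg
  rw [pd, hc, fderiv_comp p hg' (proj34.differentiableAt)]
  rw [ContinuousLinearMap.fderiv]
  simp only [ContinuousLinearMap.coe_comp', Function.comp_apply]
  rw [proj34_apply]
  by_cases h : (j : ℕ) < 3
  · rw [dif_pos h]
    have : proj34 (Pi.single j 1) = Pi.single (⟨j, h⟩ : Fin 3) 1 := by
      funext i
      show Pi.single j 1 (Fin.castSucc i) = _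
      rcases eq_or_ne (Fin.castSucc i) j with he | he
      · rw [he, Pi.single_eq_same]
        have : i = ⟨(j : ℕ), h⟩ := by
          apply Fin.ext
          have := congrArg Fin.val he
          simpa using this
        rw [this, Pi.single_eq_same]
      · rw [Pi.single_eq_of_ne he]
        have : i ≠ ⟨(j : ℕ), h⟩ := by
          intro hh; apply he; apply Fin.ext; rw [hh]; rfl
        rw [Pi.single_eq_of_ne this]
    rw [this, pd]
  · rw [dif_neg h]
    have hj : j = 3 := by omega
    have : proj34 (Pi.single j 1) = 0 := by
      funext i
      show Pi.single j 1 (Fin.castSucc i) = 0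
      rw [Pi.single_eq_of_ne]
      subst hj; intro hh
      have := congrArg Fin.val hh
      simp [Fin.castSucc] at this
      omega
    rw [this, map_zero]






lemma diff_comp_pi {g : (Fin 3 → ℝ) → ℝ} (hg : Differentiable ℝ g) :
    Differentiable ℝ (fun q : Fin 4 → ℝ => g ![q 0, q 1, q 2]) := by
  have hc : (fun q : Fin 4 → ℝ => g ![q 0, q 1, q 2]) = g ∘ proj34 := by
    funext q; simp [proj34_apply]
  rw [hc]; exact hg.comp proj34.differentiable

lemma diff_coord {n : ℕ} (i : Fin n) : Differentiable ℝ (fun q : Fin n → ℝ => q i) :=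
  (ContinuousLinearMap.proj i : (Fin n → ℝ) →L[ℝ] ℝ).differentiable

lemma pd_comp0 (g : (Fin 3 → ℝ) → ℝ) (p : Fin 4 → ℝ)
    (hg : DifferentiableAt ℝ g ![p 0, p 1, p 2]) :
    pd 0 (fun q => g ![q 0, q 1, q 2]) p = pd 0 g ![p 0, p 1, p 2] := by
  rw [pd_comp_pi g p hg 0]; rfl

lemma pd_comp1 (g : (Fin 3 → ℝ) → ℝ) (p : Fin 4 → ℝ)
    (hg : DifferentiableAt ℝ g ![p 0, p 1, p 2]) :
    pd 1 (fun q => g ![q 0, q 1, q 2]) p = pd 1 g ![p 0, p 1, p 2] := by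
  rw [pd_comp_pi g p hg 1]; rfl

lemma pd_comp2 (g : (Fin 3 → ℝ) → ℝ) (p : Fin 4 → ℝ)
    (hg : DifferentiableAt ℝ g ![p 0, p 1, p 2]) :
    pd 2 (fun q => g ![q 0, q 1, q 2]) p = pd 2 g ![p 0, p 1, p 2] := by
  rw [pd_comp_pi g p hg 2]; rfl

lemma pd_comp3' (g : (Fin 3 → ℝ) → ℝ) (p : Fin 4 → ℝ)
    (hg : DifferentiableAt ℝ g ![p 0, p 1, p 2]) :
    pd 3 (fun q => g ![q 0, q 1, q 2]) p = 0 := by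
  rw [pd_comp_pi g p hg 3]; rfl

/-- The Lax pair of the fifth integrable type-I equation commutes on every solution. -/
theorem eq5_lax_pair_commutes
    (u : (Fin 3 → ℝ) → ℝ) (hu : ContDiff ℝ (⊤ : ℕ∞) u)
    (heq : ∀ q : Fin 3 → ℝ,
      pd 1 (pd 0 (fun r => (u r) ^ 2)) q + pd 1 (pd 1 u) q + 2 * pd 2 (pd 0 u) q = 0)
    (X Y : (Fin 4 → ℝ) → (Fin 4 → ℝ))
    (hX : ∀ p : Fin 4 → ℝ, X p =
      ![-(p 3), 1, 0, 2 * pd 0 u ![p 0, p 1, p 2] * p 3])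
    (hY : ∀ p : Fin 4 → ℝ, Y p =
      ![(1 / 2) * (p 3) ^ 2 + u ![p 0, p 1, p 2] * p 3, 0, 1,
        -(pd 0 u ![p 0, p 1, p 2] * p 3 + pd 1 u ![p 0, p 1, p 2]
          + 2 * u ![p 0, p 1, p 2] * pd 0 u ![p 0, p 1, p 2]) * p 3]) :
    ∀ p : Fin 4 → ℝ, lieBracket X Y p = 0 := by
  intro p
  have hud : Differentiable ℝ u := hu.differentiable (by simp)
  have hAd : Differentiable ℝ (pd 0 u) := (contDiff_pd hu 0).differentiable (by simp)
  have hBd : Differentiable ℝ (pd 1 u) := (contDiff_pd hu 1).differentiable (by simp)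
  have hV : Differentiable ℝ (fun q : Fin 4 → ℝ => u ![q 0, q 1, q 2]) := diff_comp_pi hud
  have hA : Differentiable ℝ (fun q : Fin 4 → ℝ => pd 0 u ![q 0, q 1, q 2]) := diff_comp_pi hAd
  have hB : Differentiable ℝ (fun q : Fin 4 → ℝ => pd 1 u ![q 0, q 1, q 2]) := diff_comp_pi hBd
  have hL : Differentiable ℝ (fun q : Fin 4 → ℝ => q 3) := diff_coord 3
  -- function rewrites
  have hXf0 : (fun q => X q 0) = fun q : Fin 4 → ℝ => -(q 3) := by
    funext q; rw [hX q]; simp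
  have hXf1 : (fun q => X q 1) = fun _ : Fin 4 → ℝ => (1:ℝ) := by
    funext q; rw [hX q]; simp
  have hXf2 : (fun q => X q 2) = fun _ : Fin 4 → ℝ => (0:ℝ) := by
    funext q; rw [hX q]; simp
  have hXf3 : (fun q => X q 3) =
      fun q : Fin 4 → ℝ => 2 * pd 0 u ![q 0, q 1, q 2] * q 3 := by
    funext q; rw [hX q]; simp
  have hYf0 : (fun q => Y q 0) =
      fun q : Fin 4 → ℝ => (1/2) * (q 3 * q 3) + u ![q 0, q 1, q 2] * q 3 := by
    funext q; rw [hY q]; simp; ring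
  have hYf1 : (fun q => Y q 1) = fun _ : Fin 4 → ℝ => (0:ℝ) := by
    funext q; rw [hY q]; simp
  have hYf2 : (fun q => Y q 2) = fun _ : Fin 4 → ℝ => (1:ℝ) := by
    funext q; rw [hY q]; simp
  have hYf3 : (fun q => Y q 3) =
      fun q : Fin 4 → ℝ =>
        -(pd 0 u ![q 0, q 1, q 2] * q 3 + pd 1 u ![q 0, q 1, q 2]
          + 2 * u ![q 0, q 1, q 2] * pd 0 u ![q 0, q 1, q 2]) * q 3 := by
    funext q; rw [hY q]; simp
  -- generic partial derivative computations
  have pF1 : ∀ j : Fin 4, pd j (fun q : Fin 4 → ℝ => -(q 3)) p =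
      -(if (3:Fin 4) = j then (1:ℝ) else 0) := by
    intro j; rw [pd_neg, pd_coord]
  have pF2 : ∀ j : Fin 4, pd j (fun q : Fin 4 → ℝ => 2 * pd 0 u ![q 0, q 1, q 2] * q 3) p =
      2 * pd j (fun q : Fin 4 → ℝ => pd 0 u ![q 0, q 1, q 2]) p * p 3
        + 2 * pd 0 u ![p 0, p 1, p 2] * (if (3:Fin 4) = j then (1:ℝ) else 0) := by
    intro j
    rw [pd_mul ((hA.const_mul 2).differentiableAt) hL.differentiableAt,
        pd_const_mul hA.differentiableAt]
    simp only [pd_coord]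
  have pF3 : ∀ j : Fin 4,
      pd j (fun q : Fin 4 → ℝ => (1/2) * (q 3 * q 3) + u ![q 0, q 1, q 2] * q 3) p =
      (1/2) * ((if (3:Fin 4) = j then (1:ℝ) else 0) * p 3
          + p 3 * (if (3:Fin 4) = j then (1:ℝ) else 0))
        + (pd j (fun q : Fin 4 → ℝ => u ![q 0, q 1, q 2]) p * p 3
          + u ![p 0, p 1, p 2] * (if (3:Fin 4) = j then (1:ℝ) else 0)) := by
    intro j
    rw [pd_add (((hL.fun_mul hL).const_mul (1/2)).differentiableAt) ((hV.fun_mul hL).differentiableAt),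
        pd_const_mul ((hL.fun_mul hL).differentiableAt),
        pd_mul hL.differentiableAt hL.differentiableAt,
        pd_mul hV.differentiableAt hL.differentiableAt]
    simp only [pd_coord]
  have pF4 : ∀ j : Fin 4, pd j (fun q : Fin 4 → ℝ =>
        -(pd 0 u ![q 0, q 1, q 2] * q 3 + pd 1 u ![q 0, q 1, q 2]
          + 2 * u ![q 0, q 1, q 2] * pd 0 u ![q 0, q 1, q 2]) * q 3) p =
      -( (pd j (fun q : Fin 4 → ℝ => pd 0 u ![q 0, q 1, q 2]) p * p 3
            + pd 0 u ![p 0, p 1, p 2] * (if (3:Fin 4) = j then (1:ℝ) else 0))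
         + pd j (fun q : Fin 4 → ℝ => pd 1 u ![q 0, q 1, q 2]) p
         + (2 * pd j (fun q : Fin 4 → ℝ => u ![q 0, q 1, q 2]) p * pd 0 u ![p 0, p 1, p 2]
            + 2 * u ![p 0, p 1, p 2]
              * pd j (fun q : Fin 4 → ℝ => pd 0 u ![q 0, q 1, q 2]) p) ) * p 3
      + -(pd 0 u ![p 0, p 1, p 2] * p 3 + pd 1 u ![p 0, p 1, p 2]
          + 2 * u ![p 0, p 1, p 2] * pd 0 u ![p 0, p 1, p 2])
          * (if (3:Fin 4) = j then (1:ℝ) else 0) := by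
    intro j
    rw [pd_mul ((((hA.fun_mul hL).fun_add hB).fun_add ((hV.const_mul 2).fun_mul hA)).fun_neg.differentiableAt)
          hL.differentiableAt,
        pd_neg,
        pd_add (((hA.fun_mul hL).fun_add hB).differentiableAt) (((hV.const_mul 2).fun_mul hA).differentiableAt),
        pd_add ((hA.fun_mul hL).differentiableAt) (hB.differentiableAt),
        pd_mul hA.differentiableAt hL.differentiableAt,
        pd_mul ((hV.const_mul 2).differentiableAt) hA.differentiableAt,
        pd_const_mul hV.differentiableAt]
    simp only [pd_coord]
  -- the PDE at the base point, expanded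
  have hsq : pd 0 (fun r => u r ^ 2) = fun r => u r * pd 0 u r + u r * pd 0 u r := by
    funext r
    have h2 : (fun s : Fin 3 → ℝ => u s ^ 2) = fun s => u s * u s := by
      funext s; ring
    rw [h2, pd_mul hud.differentiableAt hud.differentiableAt]
    ring
  have hpde := heq ![p 0, p 1, p 2]
  rw [hsq, pd_add ((hud.fun_mul hAd).differentiableAt) ((hud.fun_mul hAd).differentiableAt) 1,
      pd_mul hud.differentiableAt hAd.differentiableAt 1] at hpde
  have hsym := pd_symm hu 1 0 ![p 0, p 1, p 2]
  funext i
  fin_cases i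
  · show lieBracket X Y p 0 = (0:ℝ)
    simp only [lieBracket, Fin.sum_univ_four, hXf0, hYf0]
    rw [pF3 0, pF3 1, pF3 2, pF3 3, pF1 0, pF1 1, pF1 2, pF1 3, hX p, hY p]
    simp only [pd_comp0 u p hud.differentiableAt, pd_comp1 u p hud.differentiableAt,
      pd_comp2 u p hud.differentiableAt, pd_comp3' u p hud.differentiableAt,
      Matrix.cons_val_zero, Matrix.cons_val_one, Matrix.head_cons]
    simp [Matrix.cons_val_two, Matrix.cons_val_three, Matrix.vecHead, Matrix.vecTail]
    ring
  · show lieBracket X Y p 1 = (0:ℝ)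
    simp only [lieBracket, Fin.sum_univ_four, hXf1, hYf1, pd_const]
    ring
  · show lieBracket X Y p 2 = (0:ℝ)
    simp only [lieBracket, Fin.sum_univ_four, hXf2, hYf2, pd_const]
    ring
  · show lieBracket X Y p 3 = (0:ℝ)
    simp only [lieBracket, Fin.sum_univ_four, hXf3, hYf3]
    rw [pF4 0, pF4 1, pF4 2, pF4 3, pF2 0, pF2 1, pF2 2, pF2 3, hX p, hY p]
    simp only [pd_comp0 u p hud.differentiableAt, pd_comp1 u p hud.differentiableAt,
      pd_comp2 u p hud.differentiableAt, pd_comp3' u p hud.differentiableAt,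
      pd_comp0 (pd 0 u) p hAd.differentiableAt, pd_comp1 (pd 0 u) p hAd.differentiableAt,
      pd_comp2 (pd 0 u) p hAd.differentiableAt, pd_comp3' (pd 0 u) p hAd.differentiableAt,
      pd_comp0 (pd 1 u) p hBd.differentiableAt, pd_comp1 (pd 1 u) p hBd.differentiableAt,
      pd_comp2 (pd 1 u) p hBd.differentiableAt, pd_comp3' (pd 1 u) p hBd.differentiableAt,
      Matrix.cons_val_zero, Matrix.cons_val_one, Matrix.head_cons]
    simp [Matrix.cons_val_two, Matrix.cons_val_three, Matrix.vecHead, Matrix.vecTail]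
    linear_combination (p 3)^2 * hsym - (p 3) * hpde
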